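/- For every n ≥ 1, the element d^{2^n} fixes every word of length 2 and its sections at the level-2 vertices are d^{2^n}|_{00} = 1, d^{2^n}|_{01} = 1, d^{2^n}|_{10} = a^{2^n}, d^{2^n}|_{11} = c^{2^n}; and the element a^{2^n} fixes every word of length 1 and satisfies a^{2^n}|_0 = a^{2^n}|_1 = d^{2^{n-1}}. -/

import Mathlib

namespace BVTree

/-- States of the automaton (generators, their inverses, and the identity). -/
inductive Q : Type
  | e | qa | qb | qc | qd | qa' | qb' | qc' | qd'
  deriving DecidableEq

open Q

/-- Output function of the automaton. -/
def Qout : Q → Bool → Bool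
  | qa, x => !x
  | qa', x => !x
  | _, x => x

/-- Transition function of the automaton. -/
def Qtrans : Q → Bool → Q
  | qa, false => qd
  | qa, true => e
  | qb, false => qa
  | qb, true => qc
  | qc, _ => qa
  | qd, false => e
  | qd, true => qb
  | qa', false => e
  | qa', true => qd'
  | qb', false => qa'
  | qb', true => qc'
  | qc', _ => qa'
  | qd', false => e
  | qd', true => qb'
  | e, _ => e

/-- The state corresponding to the inverse automorphism. -/
def Qinv : Q → Q
  | e => e
  | qa => qa' | qb => qb' | qc => qc' | qd => qd'
  | qa' => qa | qb' => qb | qc' => qc | qd' => qd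

/-- The action of a state on finite binary words. -/
def act : Q → List Bool → List Bool
  | _, [] => []
  | q, x :: w => Qout q x :: act (Qtrans q x) w

lemma act_inv (q : Q) : ∀ w, act (Qinv q) (act q w) = w := by
  intro w
  induction w generalizing q with
  | nil => rfl
  | cons x w ih =>
    have h1 : Qout (Qinv q) (Qout q x) = x := by cases q <;> cases x <;> rfl
    have h2 : Qtrans (Qinv q) (Qout q x) = Qinv (Qtrans q x) := by
      cases q <;> cases x <;> rfl
    simp [act, h1, h2, ih]

/-- The tree automorphism determined by a state of the automaton. -/
def aut (q : Q) : Equiv.Perm (List Bool) where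
  toFun := act q
  invFun := act (Qinv q)
  left_inv := act_inv q
  right_inv := by
    intro w
    have h : Qinv (Qinv q) = q := by cases q <;> rfl
    simpa [h] using act_inv (Qinv q) w

/-- The automorphism `a`: `a(0w) = 1·d(w)`, `a(1w) = 0·w`. -/
def a : Equiv.Perm (List Bool) := aut qa
/-- The automorphism `b`: `b(0w) = 0·a(w)`, `b(1w) = 1·c(w)`. -/
def b : Equiv.Perm (List Bool) := aut qb
/-- The automorphism `c`: `c(0w) = 0·a(w)`, `c(1w) = 1·a(w)`. -/
def c : Equiv.Perm (List Bool) := aut qc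
/-- The automorphism `d`: `d(0w) = 0·w`, `d(1w) = 1·b(w)`. -/
def d : Equiv.Perm (List Bool) := aut qd

/-- The group `G` generated by `a`, `b`, `c`, `d`. -/
def G : Subgroup (Equiv.Perm (List Bool)) := Subgroup.closure {a, b, c, d}

/-!
The first letter of `x :: w` is fixed by `d` and by `b`, and by `a ^ 2` since `a` swaps it twice;
the section of `a ^ 2` there is `d`. A power of a map that fixes a vertex `v` has as section at `v`
the same power of the section, so `d ^ k` has sections `1, 1, a ^ k, c ^ k` at level 2, and
`a ^ (2 * m) = (a ^ 2) ^ m` has section `d ^ m` at both level-1 vertices.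
-/

/-- `f` fixes the vertex `v` and its section there is `g`. -/
def HasSection {α : Type*} (f : Equiv.Perm (List α)) (v : List α) (g : Equiv.Perm (List α)) :
    Prop :=
  ∀ w, f (v ++ w) = v ++ g w

namespace HasSection

variable {α : Type*} {f f' g g' h : Equiv.Perm (List α)} {u v : List α}

lemma one (v : List α) : HasSection 1 v 1 := fun _ => rfl

lemma mul (hf : HasSection f v g) (hf' : HasSection f' v g') : HasSection (f * f') v (g * g') :=
  fun w => by rw [Equiv.Perm.mul_apply, hf', hf, Equiv.Perm.mul_apply]

lemma pow (hf : HasSection f v g) : ∀ k : ℕ, HasSection (f ^ k) v (g ^ k)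
  | 0 => one v
  | k + 1 => by rw [pow_succ, pow_succ]; exact (hf.pow k).mul hf

lemma append (hf : HasSection f u g) (hg : HasSection g v h) : HasSection f (u ++ v) h :=
  fun w => by rw [List.append_assoc, hf, hg, List.append_assoc]

lemma apply_eq_self (hf : HasSection f v g) (hg : g [] = []) : f v = v := by
  simpa [hg] using hf []

end HasSection

lemma act_e (w : List Bool) : act e w = w := by
  induction w with
  | nil => rfl
  | cons x w ih => simp [act, Qout, Qtrans, ih]

lemma aut_pow_apply_nil (q : Q) (k : ℕ) : (aut q ^ k) [] = [] :=
  Equiv.Perm.pow_apply_eq_self_of_apply_eq_self rfl k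

lemma d_hasSection_false : HasSection d [false] 1 := fun w => congrArg (false :: ·) (act_e w)

lemma d_hasSection_true : HasSection d [true] b := fun _ => rfl

lemma b_hasSection_false : HasSection b [false] a := fun _ => rfl

lemma b_hasSection_true : HasSection b [true] c := fun _ => rfl

lemma a_sq_hasSection (x : Bool) : HasSection (a ^ 2) [x] d := fun w => by
  rw [sq, Equiv.Perm.mul_apply]
  cases x
  · exact congrArg (false :: ·) (act_e (d w))
  · exact congrArg (true :: act qd ·) (act_e w)

lemma d_pow_hasSection (k : ℕ) :
    HasSection (d ^ k) [false, false] 1 ∧ HasSection (d ^ k) [false, true] 1 ∧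
      HasSection (d ^ k) [true, false] (a ^ k) ∧ HasSection (d ^ k) [true, true] (c ^ k) := by
  have h0 := d_hasSection_false.pow k
  rw [one_pow] at h0
  exact ⟨h0.append (.one _), h0.append (.one _), (d_hasSection_true.pow k).append
    (b_hasSection_false.pow k), (d_hasSection_true.pow k).append (b_hasSection_true.pow k)⟩

lemma a_pow_two_mul_hasSection (m : ℕ) (x : Bool) : HasSection (a ^ (2 * m)) [x] (d ^ m) := by
  rw [pow_mul]
  exact (a_sq_hasSection x).pow m

/-- for `n ≥ 1`, the level-2 sections of `d^{2^n}` are `1, 1, a^{2^n}, c^{2^n}`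
and the level-1 sections of `a^{2^n}` are both `d^{2^{n-1}}`. -/
theorem pow_sections (n : ℕ) (hn : 1 ≤ n) :
    (∀ v : List Bool, v.length = 2 → (d ^ (2 ^ n)) v = v) ∧
    (∀ w : List Bool, (d ^ (2 ^ n)) ([false, false] ++ w) = [false, false] ++ w) ∧
    (∀ w : List Bool, (d ^ (2 ^ n)) ([false, true] ++ w) = [false, true] ++ w) ∧
    (∀ w : List Bool,
      (d ^ (2 ^ n)) ([true, false] ++ w) = [true, false] ++ (a ^ (2 ^ n)) w) ∧
    (∀ w : List Bool,
      (d ^ (2 ^ n)) ([true, true] ++ w) = [true, true] ++ (c ^ (2 ^ n)) w) ∧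
    (∀ v : List Bool, v.length = 1 → (a ^ (2 ^ n)) v = v) ∧
    (∀ w : List Bool,
      (a ^ (2 ^ n)) ([false] ++ w) = [false] ++ (d ^ (2 ^ (n - 1))) w) ∧
    (∀ w : List Bool,
      (a ^ (2 ^ n)) ([true] ++ w) = [true] ++ (d ^ (2 ^ (n - 1))) w) := by
  obtain ⟨h00, h01, h10, h11⟩ := d_pow_hasSection (2 ^ n)
  have ha : ∀ x, HasSection (a ^ 2 ^ n) [x] (d ^ 2 ^ (n - 1)) := by
    rw [show 2 ^ n = 2 * 2 ^ (n - 1) by rw [← pow_succ', Nat.sub_add_cancel hn]]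
    exact a_pow_two_mul_hasSection _
  refine ⟨?_, h00, h01, h10, h11, ?_, ha false, ha true⟩
  · intro v hv
    obtain ⟨x, y, rfl⟩ := List.length_eq_two.mp hv
    cases x <;> cases y
    exacts [h00.apply_eq_self rfl, h01.apply_eq_self rfl,
      h10.apply_eq_self (aut_pow_apply_nil _ _), h11.apply_eq_self (aut_pow_apply_nil _ _)]
  · intro v hv
    obtain ⟨x, rfl⟩ := List.length_eq_one_iff.mp hv
    exact (ha x).apply_eq_self (aut_pow_apply_nil _ _)

end BVTree
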